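/- Let F3 = [[1,0,0],[1,1,0],[1,1,1]] and G24 = F3 ⊗ F8. Let T3 be the 24×24 block matrix [[I8,0,I8],[0,I8,0],[0,0,T]]. Then the rows of T3·G24 indexed by A3 = {4,6,7,8,12,14,15,16,18,19,20,24} generate the (24,12,8) extended Golay code given by [[0,G8,G8],[G8,G8,0],[G8',G8',G8']]. -/

import Mathlib

/-!
Over GF(2), block multiplication gives
`T3 * G24 = [[0, F8, F8], [F8, F8, 0], [T F8, T F8, T F8]]`, the corner being `F8 + F8 = 0`.
The Reed–Muller generator `G8` consists of rows 4, 6, 7, 8 of `F8`, and `G8'` of rows 4, 3, 2, 8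
of `T F8`. Hence the rows of `T3 * G24` indexed by `A3` are exactly the rows of the Golay
generator, and the two spans agree.
-/

open Matrix

/-- Generator matrix of the (8,4,4) Reed–Muller code. -/
def G8 : Matrix (Fin 4) (Fin 8) (ZMod 2) :=
  !![1,1,1,1,0,0,0,0; 1,1,0,0,1,1,0,0; 1,0,1,0,1,0,1,0; 1,1,1,1,1,1,1,1]

/-- Column-permuted copy of G8 (permutation π3). -/
def G8' : Matrix (Fin 4) (Fin 8) (ZMod 2) :=
  !![0,1,1,1,1,0,0,0; 1,0,0,1,1,1,0,0; 1,1,0,0,1,0,1,0; 1,1,1,1,1,1,1,1]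

/-- Assemble a 12×24 matrix from a 3×3 array of 4×8 blocks. -/
def build (M : Fin 3 → Fin 3 → Matrix (Fin 4) (Fin 8) (ZMod 2)) :
    Matrix (Fin 12) (Fin 24) (ZMod 2) :=
  Matrix.of fun i j =>
    M ⟨i.1 / 4, by have := i.2; omega⟩ ⟨j.1 / 8, by have := j.2; omega⟩
      ⟨i.1 % 4, by omega⟩ ⟨j.1 % 8, by omega⟩

/-- Assemble a 24×24 matrix from a 3×3 array of 8×8 blocks. -/
def build8 (M : Fin 3 → Fin 3 → Matrix (Fin 8) (Fin 8) (ZMod 2)) :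
    Matrix (Fin 24) (Fin 24) (ZMod 2) :=
  Matrix.of fun i j =>
    M ⟨i.1 / 8, by have := i.2; omega⟩ ⟨j.1 / 8, by have := j.2; omega⟩
      ⟨i.1 % 8, by omega⟩ ⟨j.1 % 8, by omega⟩

/-- The binary linear code generated by (the rows of) a matrix. -/
def code {k n : ℕ} (M : Matrix (Fin k) (Fin n) (ZMod 2)) :
    Submodule (ZMod 2) (Fin n → ZMod 2) :=
  LinearMap.range M.vecMulLinear

/-- The cubing-construction generator matrix of the (24,12,8) extended Golay code. -/
def Ghat : Matrix (Fin 12) (Fin 24) (ZMod 2) :=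
  build ![![G8, 0, G8], ![0, G8, G8], ![G8', G8', G8']]

/-- The 2×2 polar kernel. -/
def F2k : Matrix (Fin 2) (Fin 2) (ZMod 2) := !![1,0; 1,1]

/-- F8 = F2 ⊗ F2 ⊗ F2 (Kronecker product), written entrywise. -/
def F8 : Matrix (Fin 8) (Fin 8) (ZMod 2) :=
  Matrix.of fun i j =>
    F2k ⟨i.1 / 4, by have := i.2; omega⟩ ⟨j.1 / 4, by have := j.2; omega⟩ *
    F2k ⟨i.1 / 2 % 2, by omega⟩ ⟨j.1 / 2 % 2, by omega⟩ *
    F2k ⟨i.1 % 2, by omega⟩ ⟨j.1 % 2, by omega⟩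

/-- The 8×8 convolution matrix T of Proposition 1: identity plus extra ones at
(one-based) positions (2,3), (2,7), (3,4), (3,6), (4,5). -/
def T8 : Matrix (Fin 8) (Fin 8) (ZMod 2) :=
  Matrix.of fun i j =>
    if i = j ∨ (i = 1 ∧ j = 2) ∨ (i = 1 ∧ j = 6) ∨ (i = 2 ∧ j = 3) ∨
       (i = 2 ∧ j = 5) ∨ (i = 3 ∧ j = 4) then 1 else 0

def F3c : Matrix (Fin 3) (Fin 3) (ZMod 2) := !![1,0,0; 1,1,0; 1,1,1]

/-- G24 = F3 ⊗ F8 for Kernel 3. -/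
def G24c : Matrix (Fin 24) (Fin 24) (ZMod 2) :=
  Matrix.of fun i j =>
    F3c ⟨i.1 / 8, by have := i.2; omega⟩ ⟨j.1 / 8, by have := j.2; omega⟩ *
    F8 ⟨i.1 % 8, by omega⟩ ⟨j.1 % 8, by omega⟩

/-- T3 = [[I8,0,I8],[0,I8,0],[0,0,T]]. -/
def T3 : Matrix (Fin 24) (Fin 24) (ZMod 2) :=
  build8 ![![1, 0, 1], ![0, 1, 0], ![0, 0, T8]]

lemma code_submatrix {k m n : ℕ} (A : Matrix (Fin m) (Fin n) (ZMod 2)) (f : Fin k → Fin m) :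
    code (A.submatrix f id) = Submodule.span (ZMod 2) ((fun i => A i) '' Set.range f) := by
  rw [code, range_vecMulLinear, ← Set.range_comp]
  rfl

def blockIndex8 : Fin 3 × Fin 8 ≃ Fin 24 := finProdFinEquiv

def blockIndex4 : Fin 3 × Fin 4 ≃ Fin 12 := finProdFinEquiv

lemma build8_apply (M : Matrix (Fin 3) (Fin 3) (Matrix (Fin 8) (Fin 8) (ZMod 2))) (i j : Fin 24) :
    build8 M i j = M (blockIndex8.symm i).1 (blockIndex8.symm j).1
      (blockIndex8.symm i).2 (blockIndex8.symm j).2 := rfl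

lemma build_apply (N : Fin 3 → Fin 3 → Matrix (Fin 4) (Fin 8) (ZMod 2)) (i : Fin 12)
    (j : Fin 24) :
    build N i j = N (blockIndex4.symm i).1 (blockIndex8.symm j).1
      (blockIndex4.symm i).2 (blockIndex8.symm j).2 := rfl

lemma build8_mul (M N : Matrix (Fin 3) (Fin 3) (Matrix (Fin 8) (Fin 8) (ZMod 2))) :
    build8 M * build8 N = build8 (M * N) := by
  ext i j
  rw [mul_apply, ← blockIndex8.sum_comp, Fintype.sum_prod_type]
  simp only [build8_apply, Equiv.symm_apply_apply, mul_apply, Matrix.sum_apply]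

def blockRowSelect (σ : Fin 3 → Fin 4 → Fin 8) (i : Fin 12) : Fin 24 :=
  blockIndex8 ((blockIndex4.symm i).1, σ (blockIndex4.symm i).1 (blockIndex4.symm i).2)

lemma build_eq_submatrix_build8 (M : Matrix (Fin 3) (Fin 3) (Matrix (Fin 8) (Fin 8) (ZMod 2)))
    (σ : Fin 3 → Fin 4 → Fin 8) :
    build (fun a c => (M a c).submatrix (σ a) id) =
      (build8 M).submatrix (blockRowSelect σ) id := by
  ext i j
  simp only [build_apply, submatrix_apply, build8_apply, blockRowSelect, Equiv.symm_apply_apply,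
    id]

lemma G24c_eq_build8 : G24c = build8 (F3c.map (· • F8)) := rfl

lemma F3c_map_smul (B : Matrix (Fin 8) (Fin 8) (ZMod 2)) :
    F3c.map (· • B) = !![B, 0, 0; B, B, 0; B, B, B] := by
  ext a c : 1
  fin_cases a <;> fin_cases c <;> simp [F3c]

open CharTwo in
lemma T3_mul_G24c :
    T3 * G24c = build8 !![0, F8, F8; F8, F8, 0; T8 * F8, T8 * F8, T8 * F8] := by
  rw [G24c_eq_build8, F3c_map_smul, show T3 = build8 !![1, 0, 1; 0, 1, 0; 0, 0, T8] from rfl,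
    build8_mul, mul_fin_three]
  simp

lemma G8_eq_submatrix_F8 : G8 = F8.submatrix ![3, 5, 6, 7] id := by decide

lemma G8'_eq_submatrix_T8_mul_F8 : G8' = (T8 * F8).submatrix ![3, 2, 1, 7] id := by decide

-- Zero-based; the last block lists rows of `T8 * F8` in the order of the rows of `G8'`.
def golayRows : Fin 3 → Fin 4 → Fin 8 := ![![3, 5, 6, 7], ![3, 5, 6, 7], ![3, 2, 1, 7]]

lemma golay_blocks_eq_submatrix :
    ![![0, G8, G8], ![G8, G8, 0], ![G8', G8', G8']] = fun a c =>
      ((!![0, F8, F8; F8, F8, 0; T8 * F8, T8 * F8, T8 * F8] : Matrix (Fin 3) (Fin 3) _) a c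
        ).submatrix (golayRows a) id := by
  rw [G8_eq_submatrix_F8, G8'_eq_submatrix_T8_mul_F8]
  funext a c
  fin_cases a <;> fin_cases c <;> rfl

lemma range_blockRowSelect_golayRows :
    Set.range (blockRowSelect golayRows) =
      ({3, 5, 6, 7, 11, 13, 14, 15, 17, 18, 19, 23} : Set (Fin 24)) := by
  ext x
  simp only [Set.mem_range]
  revert x
  decide

/-- The rows of T3·G24 indexed by A3 (one-based {4,6,7,8,12,14,15,16,18,19,20,24})
generate the extended Golay code [[0,G8,G8],[G8,G8,0],[G8',G8',G8']]. -/
theorem kernel3_golay :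
    Submodule.span (ZMod 2)
      ((fun i => (T3 * G24c) i) ''
        ({3, 5, 6, 7, 11, 13, 14, 15, 17, 18, 19, 23} : Set (Fin 24))) =
    code (build ![![0, G8, G8], ![G8, G8, 0], ![G8', G8', G8']]) := by
  rw [golay_blocks_eq_submatrix, build_eq_submatrix_build8, ← T3_mul_G24c, code_submatrix,
    range_blockRowSelect_golayRows]
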